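/- arXiv:math/0507009 — 2 statements merged into one kernel-verified Lean document; each statement's English description precedes it below -/
import Mathlib

section
/- Let L/K be a finite Galois extension of fields with Galois group G = Gal(L/K), and regard L, with its additive structure and the natural G-action, as a representation of G over K. Then the group cohomology H^i(G, L) vanishes for every i > 0. -/
/-!
By the normal basis theorem, `L` has a `K`-basis `(σ x)_{σ ∈ G}` permuted by `G` through left
multiplication, so `L ≅ K[G]`, which for finite `G` is the representation coinduced from the
trivial representation `K` of the trivial subgroup. Shapiro's lemma then identifies `Hⁱ(G, L)`
with `Hⁱ(1, K)`, which vanishes for `i > 0`.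
-/

open CategoryTheory

universe u

namespace Representation

variable {k G H A : Type*} [Semiring k] [Monoid G] [Monoid H] [AddCommMonoid A] [Module k A]

theorem coindV_eq_top_of_subsingleton [Subsingleton G] (φ : G →* H) (σ : Representation k G A) :
    coindV φ σ = ⊤ := by
  refine Submodule.eq_top_iff'.2 fun f g h => ?_
  rw [Subsingleton.elim g 1, map_one, one_mul, map_one, Module.End.one_apply]

end Representation

namespace Module.Basis

variable {k G V : Type*} [Semiring k] [Group G] [AddCommMonoid V] [Module k V]

theorem repr_representation_apply {ρ : Representation k G V} (b : Basis G k V)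
    (hb : ∀ g h, ρ g (b h) = b (g * h)) (g : G) (x : V) (h : G) :
    b.repr (ρ g x) h = b.repr x (g⁻¹ * h) := by
  have : Finsupp.lapply h ∘ₗ b.repr.toLinearMap ∘ₗ ρ g =
      Finsupp.lapply (g⁻¹ * h) ∘ₗ b.repr.toLinearMap :=
    b.ext fun j => by
      classical
      simp only [LinearMap.comp_apply, hb, LinearEquiv.coe_coe, repr_self,
        Finsupp.lapply_apply, Finsupp.single_apply, eq_inv_mul_iff_mul_eq]
  exact LinearMap.congr_fun this x

end Module.Basis

section

open groupCohomology

variable {k G V : Type u} [CommRing k] [Group G] [Finite G] [AddCommGroup V] [Module k V]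

theorem isZero_groupCohomology_succ_of_basis_mul {ρ : Representation k G V}
    (b : Module.Basis G k V) (hb : ∀ g h, ρ g (b h) = b (g * h)) (n : ℕ) :
    Limits.IsZero (groupCohomology (Rep.of ρ) (n + 1)) := by
  let B : Rep k (⊥ : Subgroup G) := Rep.trivial k _ k
  -- `x ↦ (σ ↦ b-coordinate of x at σ⁻¹)` turns left multiplication into right translation.
  let e : V ≃ₗ[k] Representation.coindV (⊥ : Subgroup G).subtype B.ρ :=
    b.equivFun ≪≫ₗ LinearEquiv.funCongrLeft k k (Equiv.inv G) ≪≫ₗ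
      (LinearEquiv.ofTop _ (Representation.coindV_eq_top_of_subsingleton _ _)).symm
  refine (isZero_groupCohomology_succ_of_subsingleton B n).of_iso
    (mapIso (MulEquiv.refl G) e ?_ (n + 1) ≪≫ coindIso B (n + 1))
  intro g
  ext x σ
  change b.repr (ρ g x) σ⁻¹ = b.repr x (σ * g)⁻¹
  rw [b.repr_representation_apply hb, mul_inv_rev]

end

/-- For a finite Galois extension `L/K`, the group cohomology of the Galois group
`G = Gal(L/K)` with coefficients in `L` (the additive group of `L`, with its natural
`G`-action, viewed as a `K`-linear representation) vanishes in positive degrees. -/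
theorem stmt_8 (K L : Type) [Field K] [Field L] [Algebra K L]
    [FiniteDimensional K L] [IsGalois K L]
    (ρ : Representation K (L ≃ₐ[K] L) L) (hρ : ∀ (g : L ≃ₐ[K] L) (x : L), ρ g x = g x)
    (i : ℕ) (hi : 0 < i) :
    Subsingleton (groupCohomology (Rep.of ρ) i) := by
  obtain ⟨n, rfl⟩ := Nat.exists_eq_add_one_of_ne_zero hi.ne'
  refine ModuleCat.subsingleton_of_isZero <|
    isZero_groupCohomology_succ_of_basis_mul (IsGalois.normalBasis K L) (fun g h => ?_) n
  rw [hρ, IsGalois.normalBasis_apply h, IsGalois.normalBasis_apply (g * h), AlgEquiv.mul_apply]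
end

section
/- Let p be a prime. The ring of formal power series ℤ_p[[T]] is isomorphic, as a topological ring, to the inverse limit lim_m ℤ_p[X]/((1+X)^{p^m} − 1) of the quotients of the polynomial ring ℤ_p[X] by the ideals ((1+X)^{p^m} − 1), where the transition maps are the natural quotient maps; the isomorphism sends T to the compatible family of residue classes of X. Equivalently, ℤ_p[[T]] is isomorphic to the inverse limit lim_m ℤ_p[ℤ/p^mℤ] of the group algebras of the cyclic groups ℤ/p^mℤ over ℤ_p, with transition maps induced by the quotient maps ℤ/p^{m+1}ℤ → ℤ/p^mℤ, via T ↦ (generator) − 1. -/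
noncomputable section

variable (p : ℕ) [Fact p.Prime]

/-- The ideal `((1+X)^{p^m} - 1)` of the polynomial ring `ℤ_p[X]`. -/
def cycIdeal (m : ℕ) : Ideal (Polynomial ℤ_[p]) :=
  Ideal.span {((1 + Polynomial.X : Polynomial ℤ_[p]) ^ p ^ m - 1)}

/-- `(1+X)^{p^{m'}} - 1` divides `(1+X)^{p^m} - 1` for `m' ≤ m`, so the ideals are nested. -/
lemma cycIdeal_antitone {m' m : ℕ} (h : m' ≤ m) : cycIdeal p m ≤ cycIdeal p m' := by
  rw [cycIdeal, cycIdeal, Ideal.span_le, Set.singleton_subset_iff, SetLike.mem_coe,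
    Ideal.mem_span_singleton]
  have h1 : p ^ m = p ^ m' * p ^ (m - m') := by rw [← pow_add, Nat.add_sub_cancel' h]
  have h2 := sub_dvd_pow_sub_pow ((1 + Polynomial.X : Polynomial ℤ_[p]) ^ p ^ m') 1
    (p ^ (m - m'))
  rw [one_pow, ← pow_mul, ← h1] at h2
  exact h2

/-- The natural transition (quotient) map for `m' ≤ m`, reduction modulo the larger ideal. -/
def cycTrans {m' m : ℕ} (h : m' ≤ m) :
    (Polynomial ℤ_[p] ⧸ cycIdeal p m) →+* Polynomial ℤ_[p] ⧸ cycIdeal p m' :=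
  Ideal.Quotient.factor (cycIdeal_antitone p h)

/-- The inverse limit `lim_m ℤ_p[X]/((1+X)^{p^m} - 1)`, realized as the subring of
compatible families in the product. -/
def cycLimit : Subring (∀ m, Polynomial ℤ_[p] ⧸ cycIdeal p m) where
  carrier := {f | ∀ (m' m : ℕ) (h : m' ≤ m), cycTrans p h (f m) = f m'}
  mul_mem' := by
    intro a b ha hb m' m h
    simp only [Pi.mul_apply, map_mul, ha m' m h, hb m' m h]
  one_mem' := by intro m' m h; simp only [Pi.one_apply, map_one]
  add_mem' := by
    intro a b ha hb m' m h
    simp only [Pi.add_apply, map_add, ha m' m h, hb m' m h]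
  zero_mem' := by intro m' m h; simp only [Pi.zero_apply, map_zero]
  neg_mem' := by
    intro a ha m' m h
    simp only [Pi.neg_apply, map_neg, ha m' m h]

/-- The product topology on `ℤ_p[X]` (coefficientwise). -/
instance polyTop : TopologicalSpace (Polynomial ℤ_[p]) :=
  TopologicalSpace.induced (fun f : Polynomial ℤ_[p] => (f.coeff : ℕ → ℤ_[p]))
    inferInstance

/-- The quotient topology on `ℤ_p[X]/((1+X)^{p^m} - 1)`. -/
instance cycQuotTop (m : ℕ) : TopologicalSpace (Polynomial ℤ_[p] ⧸ cycIdeal p m) :=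
  (polyTop p).coinduced (Ideal.Quotient.mk (cycIdeal p m))

/-- The product (coefficientwise) topology on `ℤ_p[[T]]`. -/
instance psTop : TopologicalSpace (PowerSeries ℤ_[p]) :=
  TopologicalSpace.induced (fun (f : PowerSeries ℤ_[p]) (n : ℕ) => PowerSeries.coeff n f)
    inferInstance

/-- The transition map `ℤ_p[ℤ/p^mℤ] → ℤ_p[ℤ/p^{m'}ℤ]` induced by the quotient map
`ℤ/p^mℤ → ℤ/p^{m'}ℤ` for `m' ≤ m`. -/
def grpTrans {m' m : ℕ} (h : m' ≤ m) :
    AddMonoidAlgebra ℤ_[p] (ZMod (p ^ m)) →+* AddMonoidAlgebra ℤ_[p] (ZMod (p ^ m')) :=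
  AddMonoidAlgebra.mapDomainRingHom ℤ_[p]
    ((ZMod.castHom (pow_dvd_pow p h) (ZMod (p ^ m'))).toAddMonoidHom)

/-- The inverse limit `lim_m ℤ_p[ℤ/p^mℤ]` of group algebras, realized as the subring of
compatible families in the product. -/
def grpLimit : Subring (∀ m, AddMonoidAlgebra ℤ_[p] (ZMod (p ^ m))) where
  carrier := {f | ∀ (m' m : ℕ) (h : m' ≤ m), grpTrans p h (f m) = f m'}
  mul_mem' := by
    intro a b ha hb m' m h
    simp only [Pi.mul_apply, map_mul, ha m' m h, hb m' m h]
  one_mem' := by intro m' m h; simp only [Pi.one_apply, map_one]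
  add_mem' := by
    intro a b ha hb m' m h
    simp only [Pi.add_apply, map_add, ha m' m h, hb m' m h]
  zero_mem' := by intro m' m h; simp only [Pi.zero_apply, map_zero]
  neg_mem' := by
    intro a ha m' m h
    simp only [Pi.neg_apply, map_neg, ha m' m h]

/-- The product topology on the group algebra `ℤ_p[ℤ/p^mℤ]` (coefficientwise). -/
instance grpAlgTop (m : ℕ) : TopologicalSpace (AddMonoidAlgebra ℤ_[p] (ZMod (p ^ m))) :=
  TopologicalSpace.induced
    (fun f : AddMonoidAlgebra ℤ_[p] (ZMod (p ^ m)) => (f.coeff : ZMod (p ^ m) → ℤ_[p]))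
    inferInstance

/-!
Since `ω_m = (1 + X)^{p^m} - 1` is a distinguished polynomial, Weierstrass division identifies
`ℤ_p[X]/(ω_m)` with `ℤ_p[[X]]/(ω_m)`, which gives compatible ring maps `ℤ_p[[X]] → ℤ_p[X]/(ω_m)`.
Their joint kernel is trivial: `ω_m` lies in the `(m+1)`-st power of the maximal ideal `(p, X)`
of the Noetherian local ring `ℤ_p[[X]]`, so Krull's intersection theorem applies.
Modulo `ω_m` we have `X^{p^m} ≡ p u`, so a power series whose coefficients below `k p^m` are
divisible by `p^k` is sent into `p^k ℤ_p[X]/(ω_m)`; this makes the maps continuous. As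
`ℤ_p[[X]]` is compact and the limit is Hausdorff, the image is closed, and it contains the
classes of polynomials, which are dense: the map is a ring isomorphism and a homeomorphism.
Finally `R[X]/((1 + X)^n - 1) ≅ R[ℤ/n]` via `1 + X ↦ [1]`, compatibly with the transition maps.
-/

open Polynomial IsLocalRing Filter Topology

lemma pow_pow_sub_one_mem_pow {A : Type*} [CommRing A] {I : Ideal A} {a : A} {q : ℕ}
    (ha : a - 1 ∈ I) (hq : (q : A) ∈ I) (m : ℕ) : a ^ q ^ m - 1 ∈ I ^ (m + 1) := by
  induction m with
  | zero => simpa using ha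
  | succ m ih =>
    set b := a ^ q ^ m
    have hgeom : ∑ i ∈ Finset.range q, b ^ i ∈ I := by
      have hsplit : ∑ i ∈ Finset.range q, b ^ i = ∑ i ∈ Finset.range q, (b ^ i - 1) + q := by
        simp
      rw [hsplit]
      refine add_mem (Ideal.sum_mem _ fun i _ => Ideal.mem_of_dvd _ ?_
        (Ideal.pow_le_self m.succ_ne_zero ih)) hq
      simpa using sub_dvd_pow_sub_pow b 1 i
    rw [pow_succ q m, pow_mul, ← mul_geom_sum, pow_succ I]
    exact Ideal.mul_mem_mul ih hgeom

lemma PowerSeries.mem_maximalIdeal_iff_constantCoeff_mem {A : Type*} [CommRing A] [IsLocalRing A]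
    {f : PowerSeries A} :
    f ∈ maximalIdeal (PowerSeries A) ↔ PowerSeries.constantCoeff f ∈ maximalIdeal A := by
  rw [mem_maximalIdeal, mem_nonunits_iff, PowerSeries.isUnit_iff_constantCoeff, mem_maximalIdeal,
    mem_nonunits_iff]

section GroupAlgebra

def zmodPowHom {n : ℕ} [NeZero n] {M : Type*} [Monoid M] {u : M} (hu : u ^ n = 1) :
    Multiplicative (ZMod n) →* M where
  toFun x := u ^ (Multiplicative.toAdd x).val
  map_one' := by simp
  map_mul' x y := by
    rw [toAdd_mul, ZMod.val_add, ← pow_add]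
    exact (pow_eq_pow_mod _ hu).symm

lemma zmodPowHom_ofAdd_natCast {n : ℕ} [NeZero n] {M : Type*} [Monoid M] {u : M} (hu : u ^ n = 1)
    (a : ℕ) : zmodPowHom hu (Multiplicative.ofAdd (a : ZMod n)) = u ^ a := by
  show u ^ (a : ZMod n).val = u ^ a
  rw [ZMod.val_natCast]
  exact (pow_eq_pow_mod _ hu).symm

variable (R : Type*) [CommRing R] (n : ℕ)

lemma eval₂_single_one_sub_one :
    eval₂ (Algebra.ofId R (AddMonoidAlgebra R (ZMod n)) : R →+* AddMonoidAlgebra R (ZMod n))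
      (AddMonoidAlgebra.single 1 1 - 1) ((1 + X : R[X]) ^ n - 1) = 0 := by
  simp [AddMonoidAlgebra.single_pow, ← AddMonoidAlgebra.one_def]

def toGroupAlgebra : AdjoinRoot ((1 + X : R[X]) ^ n - 1) →ₐ[R] AddMonoidAlgebra R (ZMod n) :=
  AdjoinRoot.liftAlgHom _ _ _ (eval₂_single_one_sub_one R n)

lemma one_add_root_pow : (1 + AdjoinRoot.root ((1 + X : R[X]) ^ n - 1)) ^ n = 1 := by
  have h := AdjoinRoot.mk_self (f := (1 + X : R[X]) ^ n - 1)
  rwa [map_sub, map_pow, map_add, map_one, AdjoinRoot.mk_X, sub_eq_zero] at h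

variable [NeZero n]

def ofGroupAlgebra : AddMonoidAlgebra R (ZMod n) →ₐ[R] AdjoinRoot ((1 + X : R[X]) ^ n - 1) :=
  AddMonoidAlgebra.lift R _ _ (zmodPowHom (one_add_root_pow R n))

def groupAlgebraEquiv : AdjoinRoot ((1 + X : R[X]) ^ n - 1) ≃ₐ[R] AddMonoidAlgebra R (ZMod n) :=
  AlgEquiv.ofAlgHom (toGroupAlgebra R n) (ofGroupAlgebra R n)
    (by
      refine AddMonoidAlgebra.algHom_ext (fun a => ?_) (Subsingleton.elim _ _)
      obtain ⟨k, rfl⟩ : ∃ k : ℕ, (k : ZMod n) = a := ⟨a.val, ZMod.natCast_zmod_val a⟩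
      rw [AlgHom.comp_apply, ofGroupAlgebra, AddMonoidAlgebra.lift_single, one_smul,
        zmodPowHom_ofAdd_natCast]
      simp [toGroupAlgebra, AddMonoidAlgebra.single_pow])
    (by
      refine AdjoinRoot.algHom_ext ?_
      have h := zmodPowHom_ofAdd_natCast (one_add_root_pow R n) 1
      rw [Nat.cast_one, pow_one] at h
      simp [toGroupAlgebra, ofGroupAlgebra, h])

lemma groupAlgebraEquiv_root :
    groupAlgebraEquiv R n (AdjoinRoot.root _) = AddMonoidAlgebra.single 1 1 - 1 :=
  AdjoinRoot.liftAlgHom_root _ _ _ (eval₂_single_one_sub_one R n)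

end GroupAlgebra

namespace Iwasawa

def cycPoly (m : ℕ) : ℤ_[p][X] := (1 + X) ^ p ^ m - 1

lemma cycPoly_eq (m : ℕ) : cycPoly p m = (X + C 1) ^ p ^ m - 1 := by
  rw [cycPoly, map_one, add_comm]

lemma cycPoly_sub_X_pow_mem (m : ℕ) :
    cycPoly p m - X ^ p ^ m ∈ (maximalIdeal ℤ_[p]).map C := by
  rw [← PadicInt.ker_toZMod, ← ker_mapRingHom, RingHom.mem_ker]
  simp [cycPoly, add_pow_char_pow]

lemma natDegree_cycPoly (m : ℕ) : (cycPoly p m).natDegree = p ^ m := by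
  rw [cycPoly_eq, natDegree_sub_eq_left_of_natDegree_lt] <;>
    rw [natDegree_pow, natDegree_X_add_C, mul_one]
  simpa using pow_pos (Fact.out : p.Prime).pos m

lemma monic_cycPoly (m : ℕ) : (cycPoly p m).Monic := by
  rw [cycPoly_eq]
  refine (monic_X_add_C (1 : ℤ_[p])).pow _ |>.sub_of_left ?_
  rw [degree_pow, degree_X_add_C, degree_one, nsmul_one]
  exact_mod_cast pow_pos (Fact.out : p.Prime).pos m

lemma isDistinguishedAt_cycPoly (m : ℕ) :
    (cycPoly p m).IsDistinguishedAt (maximalIdeal ℤ_[p]) where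
  monic := monic_cycPoly p m
  mem {n} hn := by
    rw [natDegree_cycPoly] at hn
    have h := Ideal.mem_map_C_iff.mp (cycPoly_sub_X_pow_mem p m) n
    rwa [coeff_sub, coeff_X_pow, if_neg hn.ne, sub_zero] at h

lemma mk_cycPoly (m : ℕ) : Ideal.Quotient.mk (cycIdeal p m) (cycPoly p m) = 0 :=
  Ideal.Quotient.eq_zero_iff_mem.mpr (Ideal.subset_span (Set.mem_singleton _))

lemma p_dvd_mk_X_pow (m : ℕ) :
    (p : ℤ_[p][X] ⧸ cycIdeal p m) ∣ Ideal.Quotient.mk (cycIdeal p m) X ^ p ^ m := by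
  have h := cycPoly_sub_X_pow_mem p m
  rw [PadicInt.maximalIdeal_eq_span_p, Ideal.map_span, Set.image_singleton,
    Ideal.mem_span_singleton] at h
  simpa [mk_cycPoly] using map_dvd (Ideal.Quotient.mk (cycIdeal p m)) (dvd_sub_comm.mp h)

lemma cycTrans_mk {m' m : ℕ} (h : m' ≤ m) (g : ℤ_[p][X]) :
    cycTrans p h (Ideal.Quotient.mk _ g) = Ideal.Quotient.mk _ g :=
  Ideal.Quotient.factor_mk _ _

def cycQuotEquiv (m : ℕ) : (ℤ_[p][X] ⧸ cycIdeal p m) ≃ₐ[ℤ_[p]]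
    PowerSeries ℤ_[p] ⧸ Ideal.span {(cycPoly p m : PowerSeries ℤ_[p])} :=
  (isDistinguishedAt_cycPoly p m).algEquivQuotient

lemma cycQuotEquiv_mk (m : ℕ) (g : ℤ_[p][X]) :
    cycQuotEquiv p m (Ideal.Quotient.mk _ g) = Ideal.Quotient.mk _ (g : PowerSeries ℤ_[p]) :=
  rfl

def cycProj (m : ℕ) : PowerSeries ℤ_[p] →+* ℤ_[p][X] ⧸ cycIdeal p m :=
  (cycQuotEquiv p m).symm.toRingEquiv.toRingHom.comp (Ideal.Quotient.mk _)

lemma cycProj_coe (m : ℕ) (g : ℤ_[p][X]) :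
    cycProj p m g = Ideal.Quotient.mk (cycIdeal p m) g :=
  (cycQuotEquiv p m).symm_apply_eq.mpr (cycQuotEquiv_mk p m g).symm

lemma cycProj_X (m : ℕ) : cycProj p m PowerSeries.X = Ideal.Quotient.mk (cycIdeal p m) X := by
  simpa using cycProj_coe p m X

lemma cycProj_eq_zero_iff (m : ℕ) (f : PowerSeries ℤ_[p]) :
    cycProj p m f = 0 ↔ f ∈ Ideal.span {(cycPoly p m : PowerSeries ℤ_[p])} := by
  rw [cycProj, RingHom.comp_apply, RingEquiv.toRingHom_eq_coe, RingHom.coe_coe,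
    RingEquiv.map_eq_zero_iff, Ideal.Quotient.eq_zero_iff_mem]

lemma cycTrans_cycProj {m' m : ℕ} (h : m' ≤ m) (f : PowerSeries ℤ_[p]) :
    cycTrans p h (cycProj p m f) = cycProj p m' f := by
  obtain ⟨g, hg⟩ := Ideal.Quotient.mk_surjective (cycProj p m f)
  have hdvd : (cycPoly p m' : PowerSeries ℤ_[p]) ∣ cycPoly p m :=
    map_dvd Polynomial.coeToPowerSeries.ringHom <| Ideal.mem_span_singleton.mp <|
      cycIdeal_antitone p h (Ideal.subset_span rfl)
  have hm : f - g ∈ Ideal.span {(cycPoly p m : PowerSeries ℤ_[p])} := by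
    rw [← cycProj_eq_zero_iff, map_sub, cycProj_coe, hg, sub_self]
  have hm' : cycProj p m' (f - g) = 0 :=
    (cycProj_eq_zero_iff p m' _).mpr (Ideal.span_singleton_le_span_singleton.mpr hdvd hm)
  rw [map_sub, sub_eq_zero, cycProj_coe] at hm'
  rw [hm', ← hg, cycTrans_mk]

lemma coe_cycPoly_mem_pow (m : ℕ) :
    (cycPoly p m : PowerSeries ℤ_[p]) ∈ maximalIdeal (PowerSeries ℤ_[p]) ^ (m + 1) := by
  have hX : (1 + PowerSeries.X : PowerSeries ℤ_[p]) - 1 ∈ maximalIdeal (PowerSeries ℤ_[p]) :=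
    PowerSeries.mem_maximalIdeal_iff_constantCoeff_mem.mpr (by simp)
  have hp : (p : PowerSeries ℤ_[p]) ∈ maximalIdeal (PowerSeries ℤ_[p]) :=
    PowerSeries.mem_maximalIdeal_iff_constantCoeff_mem.mpr (by simpa using PadicInt.p_nonunit)
  simpa [cycPoly] using pow_pow_sub_one_mem_pow hX hp m

lemma eq_zero_of_forall_cycProj_eq_zero {f : PowerSeries ℤ_[p]} (hf : ∀ m, cycProj p m f = 0) :
    f = 0 := by
  have hM : maximalIdeal (PowerSeries ℤ_[p]) ≠ ⊤ := Ideal.IsMaximal.ne_top inferInstance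
  rw [← Ideal.mem_bot, ← Ideal.iInf_pow_eq_bot_of_isLocalRing _ hM, Ideal.mem_iInf]
  intro k
  have hk := Ideal.span_singleton_le_iff_mem _ |>.mpr (coe_cycPoly_mem_pow p k)
  exact Ideal.pow_le_pow_right k.le_succ (hk ((cycProj_eq_zero_iff p k f).mp (hf k)))

lemma pow_dvd_cycProj {m k : ℕ} {f : PowerSeries ℤ_[p]}
    (hf : ∀ n < k * p ^ m, (p : ℤ_[p]) ^ k ∣ PowerSeries.coeff n f) :
    (p : ℤ_[p][X] ⧸ cycIdeal p m) ^ k ∣ cycProj p m f := by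
  rw [PowerSeries.eq_X_pow_mul_shift_add_trunc (k * p ^ m) f, map_add, map_mul, map_pow,
    cycProj_X, cycProj_coe]
  refine dvd_add (Dvd.dvd.mul_right ?_ _) ?_
  · rw [mul_comm, pow_mul]
    exact pow_dvd_pow_of_dvd (p_dvd_mk_X_pow p m) k
  · have htrunc : C ((p : ℤ_[p]) ^ k) ∣ f.trunc (k * p ^ m) := by
      rw [C_dvd_iff_dvd_coeff]
      intro n
      rw [PowerSeries.coeff_trunc]
      split_ifs with hn
      exacts [hf n hn, dvd_zero _]
    simpa using map_dvd (Ideal.Quotient.mk (cycIdeal p m)) htrunc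

instance : IsTopologicalAddGroup (PowerSeries ℤ_[p]) :=
  topologicalAddGroup_induced (LinearMap.pi fun n => PowerSeries.coeff (R := ℤ_[p]) n)

instance : CompactSpace (PowerSeries ℤ_[p]) :=
  let e : PowerSeries ℤ_[p] ≃ (ℕ → ℤ_[p]) :=
    { toFun := fun f n => PowerSeries.coeff n f
      invFun := PowerSeries.mk
      left_inv := fun _ => PowerSeries.ext fun n => PowerSeries.coeff_mk n _
      right_inv := fun a => funext fun n => PowerSeries.coeff_mk n a }
  (e.toHomeomorphOfIsInducing ⟨rfl⟩).symm.compactSpace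

lemma continuous_coeff (n : ℕ) : Continuous (PowerSeries.coeff (R := ℤ_[p]) n) :=
  show Continuous ((fun a : ℕ → ℤ_[p] => a n) ∘ fun f k => PowerSeries.coeff k f) from
    (continuous_apply n).comp continuous_induced_dom

lemma continuous_coe_polynomial : Continuous fun g : ℤ_[p][X] => (g : PowerSeries ℤ_[p]) :=
  continuous_induced_rng.mpr <| by simpa [Function.comp_def] using continuous_induced_dom

lemma continuous_addMonoidHom_comp_cycProj (m : ℕ) (L : (ℤ_[p][X] ⧸ cycIdeal p m) →+ ℤ_[p]) :
    Continuous fun f => L (cycProj p m f) := by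
  refine continuous_of_continuousAt_zero (L.comp (cycProj p m).toAddMonoidHom) ?_
  rw [ContinuousAt, map_zero, Metric.tendsto_nhds]
  intro ε hε
  obtain ⟨k, hk⟩ : ∃ k : ℕ, (p : ℝ) ^ (-(k : ℤ)) < ε := by
    obtain ⟨k, hk⟩ := exists_pow_lt_of_lt_one hε
      (inv_lt_one_of_one_lt₀ (Nat.one_lt_cast.mpr (Fact.out : p.Prime).one_lt))
    exact ⟨k, by rwa [zpow_neg, zpow_natCast, ← inv_pow]⟩
  have hsmall : ∀ᶠ f in 𝓝 (0 : PowerSeries ℤ_[p]), ∀ n ∈ Finset.range (k * p ^ m),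
      ‖PowerSeries.coeff n f‖ ≤ (p : ℝ) ^ (-(k : ℤ)) := by
    refine (Finset.eventually_all _).mpr fun n _ => ?_
    have hcoeff := (continuous_coeff p n).tendsto' (0 : PowerSeries ℤ_[p]) 0 (map_zero _)
    exact (hcoeff.eventually (Metric.closedBall_mem_nhds _
      (zpow_pos (Nat.cast_pos.mpr (Fact.out : p.Prime).pos) _))).mono
      fun f hf => mem_closedBall_zero_iff.mp hf
  filter_upwards [hsmall] with f hf
  obtain ⟨y, hy⟩ := pow_dvd_cycProj p fun n hn => Ideal.mem_span_singleton.mp <|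
    (PadicInt.norm_le_pow_iff_mem_span_pow _ _).mp (hf n (Finset.mem_range.mpr hn))
  have hL : L.comp (cycProj p m).toAddMonoidHom f = (p : ℤ_[p]) ^ k * L y := by
    show L (cycProj p m f) = _
    rw [hy, ← Nat.cast_pow, ← nsmul_eq_mul, map_nsmul, nsmul_eq_mul, Nat.cast_pow]
  rw [hL, dist_zero_right, norm_mul, PadicInt.norm_p_pow]
  exact lt_of_le_of_lt (mul_le_of_le_one_right (by positivity) (PadicInt.norm_le_one _)) hk

def cycRep (m : ℕ) : (ℤ_[p][X] ⧸ cycIdeal p m) →ₗ[ℤ_[p]] ℤ_[p][X] :=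
  AdjoinRoot.modByMonicHom (monic_cycPoly p m)

lemma mk_cycRep (m : ℕ) (x : ℤ_[p][X] ⧸ cycIdeal p m) :
    Ideal.Quotient.mk (cycIdeal p m) (cycRep p m x) = x :=
  AdjoinRoot.mk_leftInverse (monic_cycPoly p m) x

lemma continuous_cycRep_comp_cycProj (m : ℕ) :
    Continuous fun f : PowerSeries ℤ_[p] => cycRep p m (cycProj p m f) :=
  continuous_induced_rng.mpr <| continuous_pi fun i => continuous_addMonoidHom_comp_cycProj p m
    ((lcoeff ℤ_[p] i).toAddMonoidHom.comp (cycRep p m).toAddMonoidHom)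

lemma continuous_cycProj (m : ℕ) : Continuous (cycProj p m) := by
  have h : ⇑(cycProj p m) =
      Ideal.Quotient.mk (cycIdeal p m) ∘ fun f => cycRep p m (cycProj p m f) :=
    funext fun f => (mk_cycRep p m _).symm
  rw [h]
  exact continuous_coinduced_rng.comp (continuous_cycRep_comp_cycProj p m)

instance : T2Space ℤ_[p][X] :=
  T2Space.of_injective_continuous (fun _ _ h => Polynomial.coeff_injective h)
    (continuous_induced_dom (f := fun g : ℤ_[p][X] => (g.coeff : ℕ → ℤ_[p])))

instance (m : ℕ) : T2Space (ℤ_[p][X] ⧸ cycIdeal p m) := by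
  refine T2Space.of_injective_continuous (f := cycRep p m)
    (AdjoinRoot.mk_leftInverse (monic_cycPoly p m)).injective (continuous_coinduced_dom.mpr ?_)
  have h : cycRep p m ∘ Ideal.Quotient.mk (cycIdeal p m) =
      (fun f => cycRep p m (cycProj p m f)) ∘ fun g : ℤ_[p][X] => (g : PowerSeries ℤ_[p]) :=
    funext fun g => by simp [cycProj_coe]
  rw [h]
  exact (continuous_cycRep_comp_cycProj p m).comp (continuous_coe_polynomial p)

def toCycLimit : PowerSeries ℤ_[p] →+* cycLimit p :=
  (RingHom.pi (cycProj p)).codRestrict (cycLimit p) fun f _ _ h => cycTrans_cycProj p h f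

lemma continuous_toCycLimit : Continuous (toCycLimit p) :=
  (continuous_pi (continuous_cycProj p)).subtype_mk _

lemma toCycLimit_injective : Function.Injective (toCycLimit p) :=
  (injective_iff_map_eq_zero _).mpr fun _ hf =>
    eq_zero_of_forall_cycProj_eq_zero p fun m => congrFun (congrArg Subtype.val hf) m

lemma toCycLimit_surjective : Function.Surjective (toCycLimit p) := by
  intro q
  have hclosed : IsClosed (Set.range (toCycLimit p)) :=
    (isCompact_range (continuous_toCycLimit p)).isClosed
  have happrox : Tendsto (fun m => toCycLimit p (cycRep p m (q.1 m) : PowerSeries ℤ_[p])) atTop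
      (𝓝 q) := by
    rw [Topology.IsInducing.subtypeVal.tendsto_nhds_iff, tendsto_pi_nhds]
    refine fun j => tendsto_atTop_of_eventually_const (i₀ := j) fun m hm => ?_
    show cycProj p j (cycRep p m (q.1 m)) = q.1 j
    rw [cycProj_coe, ← q.2 j m hm, ← cycTrans_mk p hm, mk_cycRep]
  exact hclosed.mem_of_tendsto happrox (.of_forall fun m => Set.mem_range_self _)

def cycLimitEquiv : PowerSeries ℤ_[p] ≃+* cycLimit p :=
  RingEquiv.ofBijective (toCycLimit p) ⟨toCycLimit_injective p, toCycLimit_surjective p⟩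

lemma continuous_cycLimitEquiv_symm : Continuous (cycLimitEquiv p).symm :=
  (continuous_toCycLimit p).continuous_symm_of_equiv_compact_to_t2 (f := (cycLimitEquiv p).toEquiv)

lemma cycLimitEquiv_X (m : ℕ) :
    (cycLimitEquiv p PowerSeries.X : ∀ m, ℤ_[p][X] ⧸ cycIdeal p m) m =
      Ideal.Quotient.mk (cycIdeal p m) X :=
  cycProj_X p m

def grpEquiv (m : ℕ) : (ℤ_[p][X] ⧸ cycIdeal p m) ≃+* AddMonoidAlgebra ℤ_[p] (ZMod (p ^ m)) :=
  (groupAlgebraEquiv ℤ_[p] (p ^ m)).toRingEquiv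

lemma grpEquiv_mk_X (m : ℕ) :
    grpEquiv p m (Ideal.Quotient.mk _ X) = AddMonoidAlgebra.single 1 1 - 1 :=
  groupAlgebraEquiv_root ℤ_[p] (p ^ m)

lemma grpEquiv_mk_C (m : ℕ) (a : ℤ_[p]) :
    grpEquiv p m (Ideal.Quotient.mk _ (C a)) = AddMonoidAlgebra.single 0 a :=
  (groupAlgebraEquiv ℤ_[p] (p ^ m)).commutes a

lemma grpTrans_grpEquiv {m' m : ℕ} (h : m' ≤ m) (x : ℤ_[p][X] ⧸ cycIdeal p m) :
    grpTrans p h (grpEquiv p m x) = grpEquiv p m' (cycTrans p h x) := by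
  have hext : (grpTrans p h).comp (grpEquiv p m).toRingHom =
      (grpEquiv p m').toRingHom.comp (cycTrans p h) := by
    refine Ideal.Quotient.ringHom_ext (Polynomial.ringHom_ext (fun a => ?_) ?_)
    · show grpTrans p h (grpEquiv p m (Ideal.Quotient.mk _ (C a))) =
        grpEquiv p m' (cycTrans p h (Ideal.Quotient.mk _ (C a)))
      rw [cycTrans_mk, grpEquiv_mk_C, grpEquiv_mk_C]
      simp [grpTrans]
    · show grpTrans p h (grpEquiv p m (Ideal.Quotient.mk _ X)) =
        grpEquiv p m' (cycTrans p h (Ideal.Quotient.mk _ X))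
      rw [cycTrans_mk, grpEquiv_mk_X, grpEquiv_mk_X, map_sub, map_one]
      simp [grpTrans, ZMod.cast_one (pow_dvd_pow p h)]
  exact RingHom.congr_fun hext x

lemma map_cycLimit :
    (cycLimit p).map (RingEquiv.piCongrRight (grpEquiv p)).toRingHom = grpLimit p := by
  ext y
  refine (Subring.mem_map_equiv (f := RingEquiv.piCongrRight (grpEquiv p))).trans ?_
  show (∀ m' m (h : m' ≤ m),
      cycTrans p h ((grpEquiv p m).symm (y m)) = (grpEquiv p m').symm (y m')) ↔
    ∀ m' m (h : m' ≤ m), grpTrans p h (y m) = y m'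
  refine forall₃_congr fun m' m h => ?_
  rw [← (grpEquiv p m').injective.eq_iff, ← grpTrans_grpEquiv, RingEquiv.apply_symm_apply,
    RingEquiv.apply_symm_apply]

def grpLimitEquiv : PowerSeries ℤ_[p] ≃+* grpLimit p :=
  (cycLimitEquiv p).trans <|
    (RingEquiv.piCongrRight (grpEquiv p)).subringMap.trans (RingEquiv.subringCongr (map_cycLimit p))

instance (m : ℕ) : T2Space (AddMonoidAlgebra ℤ_[p] (ZMod (p ^ m))) :=
  T2Space.of_injective_continuous
    (fun _ _ h => AddMonoidAlgebra.coeffEquiv.injective (DFunLike.coe_injective h))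
    (continuous_induced_dom
      (f := fun x : AddMonoidAlgebra ℤ_[p] (ZMod (p ^ m)) => (x.coeff : ZMod (p ^ m) → ℤ_[p])))

lemma continuous_grpLimitEquiv : Continuous (grpLimitEquiv p) :=
  continuous_induced_rng.mpr <| continuous_pi fun m => continuous_induced_rng.mpr <|
    continuous_pi fun g => continuous_addMonoidHom_comp_cycProj p m <|
      ((Finsupp.applyAddHom g).comp
        (AddMonoidAlgebra.coeffAddEquiv (R := ℤ_[p]) (M := ZMod (p ^ m))).toAddMonoidHom).comp
      (grpEquiv p m).toAddMonoidHom

lemma continuous_grpLimitEquiv_symm : Continuous (grpLimitEquiv p).symm :=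
  (continuous_grpLimitEquiv p).continuous_symm_of_equiv_compact_to_t2
    (f := (grpLimitEquiv p).toEquiv)

lemma grpLimitEquiv_X (m : ℕ) :
    (grpLimitEquiv p PowerSeries.X : ∀ m, AddMonoidAlgebra ℤ_[p] (ZMod (p ^ m))) m =
      AddMonoidAlgebra.single 1 1 - 1 := by
  show grpEquiv p m (cycProj p m PowerSeries.X) = _
  rw [cycProj_X, grpEquiv_mk_X]

end Iwasawa

/-- `ℤ_p[[T]]` is isomorphic, as a topological ring, to the inverse limit
`lim_m ℤ_p[X]/((1+X)^{p^m} - 1)`, via `T ↦ (class of X)_m`; equivalently, it is isomorphic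
to the inverse limit of the group algebras `lim_m ℤ_p[ℤ/p^mℤ]`, via
`T ↦ (generator - 1)_m`. -/
theorem stmt_10 :
    (∃ e : PowerSeries ℤ_[p] ≃+* cycLimit p,
      Continuous e ∧ Continuous e.symm ∧
      ∀ m : ℕ,
        ((e PowerSeries.X : cycLimit p) : ∀ m, Polynomial ℤ_[p] ⧸ cycIdeal p m) m =
          Ideal.Quotient.mk (cycIdeal p m) Polynomial.X) ∧
    (∃ e : PowerSeries ℤ_[p] ≃+* grpLimit p,
      Continuous e ∧ Continuous e.symm ∧
      ∀ m : ℕ,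
        ((e PowerSeries.X : grpLimit p) : ∀ m, AddMonoidAlgebra ℤ_[p] (ZMod (p ^ m))) m =
          AddMonoidAlgebra.single (1 : ZMod (p ^ m)) (1 : ℤ_[p]) - 1) := by
  open Iwasawa in
  exact ⟨⟨cycLimitEquiv p, continuous_toCycLimit p, continuous_cycLimitEquiv_symm p,
    cycLimitEquiv_X p⟩, ⟨grpLimitEquiv p, continuous_grpLimitEquiv p,
    continuous_grpLimitEquiv_symm p, grpLimitEquiv_X p⟩⟩

end
end
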